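/- Every geometric lattice of finite rank at least 2 whose cardinality is less than ℵ_ω has a matching. -/

import Mathlib

universe u

/-- An element of a poset is an *atom* (point) if it is an upper cover of a least element. -/
def IsAtomP {P : Type*} [PartialOrder P] (a : P) : Prop :=
  ∃ z : P, (∀ w, z ≤ w) ∧ z ⋖ a

/-- An element of a poset is a *coatom* (hyperplane) if it is a lower cover of a greatest
element. -/
def IsCoatomP {P : Type*} [PartialOrder P] (a : P) : Prop :=
  ∃ z : P, (∀ w, w ≤ z) ∧ a ⋖ z

/-- A partial order is a *geometric lattice of finite height* if it is a lattice
(binary joins and meets exist), has no infinite chains, is semimodular, and every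
element is a join (least upper bound) of a set of atoms. -/
def IsGeomLatFH (P : Type*) [PartialOrder P] : Prop :=
  (∀ x y : P, ∃ z, IsLUB {x, y} z) ∧
  (∀ x y : P, ∃ z, IsGLB {x, y} z) ∧
  (∀ c : Set P, IsChain (· ≤ ·) c → c.Finite) ∧
  (∀ a b c : P, a ⋖ b → a ⋖ c → b ≠ c → ∃ d, b ⋖ d ∧ c ⋖ d) ∧
  (∀ x : P, ∃ S : Set P, (∀ a ∈ S, IsAtomP a) ∧ IsLUB S x)

/-- `r` is the rank (height) function of a graded bounded poset: `r ⊥ = 0` and `r`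
increases by exactly one across covering pairs. -/
def IsRankFn {L : Type*} [PartialOrder L] [OrderBot L] (r : L → ℕ) : Prop :=
  r ⊥ = 0 ∧ ∀ x y : L, x ⋖ y → r y = r x + 1

/-- A *matching* of a lattice: an injection from atoms to coatoms (hyperplanes) such
that each atom lies below its image. -/
def HasMatching (L : Type*) [CompleteLattice L] : Prop :=
  ∃ f : {a : L // IsAtom a} → {h : L // IsCoatom h},
    Function.Injective f ∧ ∀ a : {a : L // IsAtom a}, (a : L) ≤ ((f a : {h : L // IsCoatom h}) : L)

/-!
Induct on the length `n` of an interval `[u, v]`, matching its atoms (covers of `u`) into its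
coatoms (lower covers of `v`); for `n = 2` they coincide. If `[u, v]` has finitely many atoms we
check Hall's condition for a set `S` of atoms: if `S` does not span `[u, v]` it lies below a
coatom `h`, and the matching of `[u, h]` extends to `[u, v]`; if it spans, then for `p ∉ h` the
matching of `[p, v]` shows that `h` contains at most as many atoms of `S` as there are coatoms
through `p`, and double counting the non-incident pairs gives `|S| ≤ |N(S)|`.

If there are infinitely many atoms, their number `κ < ℵ_ω` is a regular cardinal. If every
atom lies on `κ` coatoms, a transfinite greedy choice is a matching. Otherwise, by regularity,
some line `ℓ` carries `κ` points, and the coatoms `h` with `ℓ ⊓ h = q` (transversals at `q`)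
give a matching of the points `q` of `ℓ`. If at most one point has a unique transversal, the
atoms off `ℓ` are injected into the points with two transversals and take the spare one. If two
points have unique transversals, every atom off `ℓ` lies in a complement `F` of `ℓ`, and the
matching of `[u, F]` joined with `ℓ` completes the matching.
-/

open Set Function

section Order

variable {α : Type*} [PartialOrder α]

theorem wellFoundedGT_of_forall_isChain_finite
    (h : ∀ c : Set α, IsChain (· ≤ ·) c → c.Finite) : WellFoundedGT α := by
  rw [WellFoundedGT, isWellFounded_iff, RelEmbedding.wellFounded_iff_isEmpty]
  refine ⟨fun f => ?_⟩
  have hf : StrictMono f := fun _ _ => f.map_rel_iff.2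
  exact infinite_range_of_injective hf.injective (h _ hf.monotone.isChain_range)

theorem wellFoundedLT_of_forall_isChain_finite
    (h : ∀ c : Set α, IsChain (· ≤ ·) c → c.Finite) : WellFoundedLT α := by
  rw [WellFoundedLT, isWellFounded_iff, RelEmbedding.wellFounded_iff_isEmpty]
  refine ⟨fun f => ?_⟩
  have hf : StrictAnti f := fun _ _ => f.map_rel_iff.2
  exact infinite_range_of_injective hf.injective (h _ hf.antitone.isChain_range)

theorem strictMono_of_covBy_imp_eq_add_one [WellFoundedLT α] [WellFoundedGT α] {r : α → ℕ}
    (hr : ∀ x y, x ⋖ y → r y = r x + 1) : StrictMono r := by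
  intro x y hxy
  induction y using WellFoundedLT.induction with
  | _ y IH =>
  obtain ⟨z, hxz, hzy⟩ := exists_le_covBy_of_lt hxy
  rw [hr _ _ hzy]
  rcases hxz.eq_or_lt with rfl | hxz
  · omega
  · have := IH z hzy.lt hxz
    omega

theorem CovBy.eq_of_covBy_of_le {u a b : α} (ha : u ⋖ a)
    (hb : u ⋖ b) (hab : a ≤ b) : a = b :=
  (hb.eq_or_eq ha.le hab).resolve_left ha.ne'

variable [GradeOrder ℕ α] {a b : α}

theorem CovBy.grade_eq_add_one (h : a ⋖ b) : grade ℕ b = grade ℕ a + 1 :=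
  (Order.covBy_iff_add_one_eq.1 (h.grade ℕ)).symm

theorem covBy_of_le_of_grade_eq_add_one (hab : a ≤ b) (h : grade ℕ b = grade ℕ a + 1) :
    a ⋖ b :=
  covBy_iff_lt_covBy_grade.2 ⟨hab.lt_of_ne (by rintro rfl; omega),
    Order.covBy_iff_add_one_eq.2 h.symm⟩

end Order

theorem CovBy.inf_eq_of_le_of_not_le {L : Type*} [Lattice L] {q y h : L} (hqy : q ⋖ y)
    (hqh : q ≤ h) (hyh : ¬ y ≤ h) : y ⊓ h = q :=
  (hqy.eq_or_eq (le_inf hqy.le hqh) inf_le_left).resolve_right fun he => hyh (he ▸ inf_le_right)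

section Semimodular

variable {L : Type*} [Lattice L] [OrderBot L] [WellFoundedLT L] [WellFoundedGT L]

theorem covBy_sup_of_isAtom_of_semimodular
    (hsm : ∀ a b c : L, a ⋖ b → a ⋖ c → b ≠ c → ∃ d, b ⋖ d ∧ c ⋖ d)
    {a : L} (ha : IsAtom a) (x : L) (hax : ¬ a ≤ x) : x ⋖ x ⊔ a := by
  induction x using WellFoundedLT.induction with
  | _ x IH =>
  rcases eq_bot_or_bot_lt x with rfl | hx
  · simpa using ha.bot_covBy
  obtain ⟨z, -, hzx⟩ := exists_le_covBy_of_lt hx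
  have hza : z ⋖ z ⊔ a := IH z hzx.lt fun h => hax (h.trans hzx.le)
  obtain ⟨d, hxd, hzad⟩ := hsm z x (z ⊔ a) hzx hza fun h => hax (h ▸ le_sup_right)
  have hd : x ⊔ a = d :=
    (hxd.eq_or_eq le_sup_left (sup_le hxd.le (le_sup_right.trans hzad.le))).resolve_left
      fun h => hax (h ▸ le_sup_right)
  exact hd ▸ hxd

theorem isUpperModularLattice_of_semimodular [IsAtomistic L]
    (hsm : ∀ a b c : L, a ⋖ b → a ⋖ c → b ≠ c → ∃ d, b ⋖ d ∧ c ⋖ d) :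
    IsUpperModularLattice L where
  covBy_sup_of_inf_covBy {a b} h := by
    obtain ⟨d, hd, hda, hdab⟩ : ∃ d, IsAtom d ∧ d ≤ a ∧ ¬ d ≤ a ⊓ b := by
      by_contra! H
      exact h.lt.not_ge (le_iff_atom_le_imp.2 H)
    have had : a ⊓ b ⊔ d = a :=
      (h.eq_or_eq le_sup_left (sup_le inf_le_left hda)).resolve_left
        fun he => hdab (he ▸ le_sup_right)
    have hab : a ⊔ b = b ⊔ d := calc
      a ⊔ b = a ⊓ b ⊔ b ⊔ d := by rw [sup_right_comm, had]
      _ = b ⊔ d := by rw [sup_eq_right.2 (inf_le_right : a ⊓ b ≤ b)]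
    rw [hab]
    exact covBy_sup_of_isAtom_of_semimodular hsm hd b fun hdb => hdab (le_inf hda hdb)

end Semimodular

theorem Finset.sum_sum_filter_not_one_div_card_mul_card {α β : Type*} (R : α → β → Prop)
    [∀ a b, Decidable (R a b)] {P : Finset α} {H : Finset β} (hP : P.Nonempty)
    (hR : ∀ p ∈ P, ∃ h ∈ H, ¬ R p h) :
    ∑ p ∈ P, ∑ h ∈ H with ¬ R p h, (1 : ℚ) / (P.card * {h ∈ H | ¬ R p h}.card) = 1 := by
  have hm : (P.card : ℚ) ≠ 0 := by exact_mod_cast hP.card_pos.ne'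
  rw [sum_congr rfl fun p hp => ?_, sum_const, nsmul_eq_mul, mul_one_div_cancel hm]
  obtain ⟨h, hh, hph⟩ := hR p hp
  have : ({h ∈ H | ¬ R p h}.card : ℚ) ≠ 0 := by
    exact_mod_cast (card_pos.2 ⟨h, mem_filter.2 ⟨hh, hph⟩⟩).ne'
  rw [sum_const, nsmul_eq_mul]
  field_simp

theorem Finset.card_le_card_of_degree_le_of_not_rel {α β : Type*} (R : α → β → Prop)
    [∀ a b, Decidable (R a b)] (P : Finset α) (H : Finset β)
    (hP : ∀ p ∈ P, ∃ h ∈ H, ¬ R p h) (hH : ∀ h ∈ H, (∃ p ∈ P, R p h) ∧ ∃ p ∈ P, ¬ R p h)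
    (hdeg : ∀ p ∈ P, ∀ h ∈ H, ¬ R p h → {q ∈ P | R q h}.card ≤ {h' ∈ H | R p h'}.card) :
    P.card ≤ H.card := by
  by_contra! hlt
  have hPne : P.Nonempty := card_pos.1 (by omega)
  have hHne : H.Nonempty := by
    obtain ⟨p, hp⟩ := hPne
    obtain ⟨h, hh, -⟩ := hP p hp
    exact ⟨h, hh⟩
  -- Weighting each non-incident pair `(p, h)` by `1 / (|P| · #{h' | ¬ R p h'})`, or by
  -- `1 / (|H| · #{q | ¬ R q h})`, gives total `1` both times; but `hdeg` and `|H| < |P|` make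
  -- the second weight the smaller one.
  have hsumH : ∑ p ∈ P, ∑ h ∈ H with ¬ R p h,
      (1 : ℚ) / (H.card * {q ∈ P | ¬ R q h}.card) = 1 := by
    rw [sum_comm' (t' := H) (s' := fun h => {q ∈ P | ¬ R q h}) (by simp; tauto)]
    exact sum_sum_filter_not_one_div_card_mul_card (fun h p => R p h) hHne
      fun h hh => (hH h hh).2
  have hterm : ∀ p ∈ P, ∀ h ∈ H, ¬ R p h → (1 : ℚ) / (H.card * {q ∈ P | ¬ R q h}.card) <
      1 / (P.card * {h' ∈ H | ¬ R p h'}.card) := by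
    intro p hp h hh hph
    have e₁ := card_filter_add_card_filter_not (s := P) (p := fun q => R q h)
    have e₂ := card_filter_add_card_filter_not (s := H) (p := fun h' => R p h')
    have hd := hdeg p hp h hh hph
    obtain ⟨q, hq, hqh⟩ := (hH h hh).1
    have hdH : 0 < {q ∈ P | R q h}.card := card_pos.2 ⟨q, mem_filter.2 ⟨hq, hqh⟩⟩
    obtain ⟨h', hh', hph'⟩ := hP p hp
    have hcH : 0 < {h' ∈ H | ¬ R p h'}.card := card_pos.2 ⟨h', mem_filter.2 ⟨hh', hph'⟩⟩
    apply one_div_lt_one_div_of_lt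
    · exact_mod_cast Nat.mul_pos (card_pos.2 hPne) hcH
    · exact_mod_cast (show P.card * {h' ∈ H | ¬ R p h'}.card < H.card * {q ∈ P | ¬ R q h}.card by
        nlinarith [Nat.mul_le_mul_left P.card hd, Nat.mul_lt_mul_of_pos_right hlt hdH])
  have hsum := sum_lt_sum_of_nonempty hPne fun p hp => by
    obtain ⟨h, hh, hph⟩ := hP p hp
    exact sum_lt_sum_of_nonempty ⟨h, mem_filter.2 ⟨hh, hph⟩⟩
      fun h hh => hterm p hp h (mem_filter.1 hh).1 (mem_filter.1 hh).2
  rw [hsumH, sum_sum_filter_not_one_div_card_mul_card R hPne hP] at hsum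
  exact hsum.false

section Matching

variable {α : Type*} [LE α] {f : α → α} {A A' B : Set α}

def IsMatching (f : α → α) (A B : Set α) : Prop :=
  MapsTo f A B ∧ InjOn f A ∧ ∀ a ∈ A, a ≤ f a

def MatchesInto (A B : Set α) : Prop :=
  ∃ f, IsMatching f A B

theorem IsMatching.mono (h : IsMatching f A B) (hA : A' ⊆ A) : IsMatching f A' B :=
  ⟨h.1.mono_left hA, h.2.1.mono hA, fun a ha => h.2.2 a (hA ha)⟩

open scoped Classical in
theorem IsMatching.piecewise {A₁ A₂ : Set α} {f₁ f₂ : α → α} (h₁ : IsMatching f₁ A₁ B)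
    (h₂ : IsMatching f₂ A₂ B) (h : ∀ a ∈ A₁, ∀ b ∈ A₂, f₁ a ≠ f₂ b) :
    IsMatching (A₁.piecewise f₁ f₂) (A₁ ∪ A₂) B := by
  have hf : ∀ a ∈ A₁ ∪ A₂, (a ∈ A₁ ∧ A₁.piecewise f₁ f₂ a = f₁ a) ∨
      (a ∈ A₂ ∧ A₁.piecewise f₁ f₂ a = f₂ a) := by
    intro a ha
    by_cases ha₁ : a ∈ A₁
    · exact Or.inl ⟨ha₁, piecewise_eq_of_mem _ _ _ ha₁⟩
    · exact Or.inr ⟨ha.resolve_left ha₁, piecewise_eq_of_notMem _ _ _ ha₁⟩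
  refine ⟨fun a ha => ?_, fun a ha b hb hab => ?_, fun a ha => ?_⟩
  · rcases hf a ha with ⟨ha, e⟩ | ⟨ha, e⟩
    · exact e ▸ h₁.1 ha
    · exact e ▸ h₂.1 ha
  · rcases hf a ha with ⟨ha, ea⟩ | ⟨ha, ea⟩ <;> rcases hf b hb with ⟨hb, eb⟩ | ⟨hb, eb⟩ <;>
      rw [ea, eb] at hab
    · exact h₁.2.1 ha hb hab
    · exact absurd hab (h a ha b hb)
    · exact absurd hab.symm (h b hb a ha)
    · exact h₂.2.1 ha hb hab
  · rcases hf a ha with ⟨ha, e⟩ | ⟨ha, e⟩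
    · exact e ▸ h₁.2.2 a ha
    · exact e ▸ h₂.2.2 a ha

open scoped Classical in
theorem matchesInto_of_injective (f : A → α) (hf : Injective f) (hB : ∀ a, f a ∈ B)
    (hle : ∀ a : A, (a : α) ≤ f a) : MatchesInto A B := by
  refine ⟨fun x => if hx : x ∈ A then f ⟨x, hx⟩ else x, fun a ha => ?_, fun a ha b hb hab => ?_,
    fun a ha => ?_⟩
  · simpa [ha] using hB ⟨a, ha⟩
  · simp only [ha, hb, dite_true] at hab
    exact congrArg Subtype.val (hf hab)
  · simpa [ha] using hle ⟨a, ha⟩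

theorem MatchesInto.exists_injective (h : MatchesInto A B) :
    ∃ f : A → B, Injective f ∧ ∀ a : A, (a : α) ≤ f a :=
  let ⟨f, hmaps, hinj, hle⟩ := h
  ⟨hmaps.restrict f A B, hmaps.restrict_inj.2 hinj, fun a => hle a a.2⟩

open scoped Classical in
theorem MatchesInto.card_le (h : MatchesInto A B) (hB : B.Finite) {S : Finset α}
    (hS : ↑S ⊆ A) : S.card ≤ {b ∈ hB.toFinset | ∃ a ∈ S, a ≤ b}.card := by
  obtain ⟨f, hmaps, hinj, hle⟩ := h
  refine Finset.card_le_card_of_injOn f (fun a ha => ?_) (hinj.mono hS)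
  simpa using ⟨hmaps (hS ha), a, ha, hle a (hS ha)⟩

open scoped Classical in
theorem matchesInto_of_forall_card_le (hB : B.Finite)
    (h : ∀ S : Finset α, ↑S ⊆ A → S.card ≤ {b ∈ hB.toFinset | ∃ a ∈ S, a ≤ b}.card) :
    MatchesInto A B := by
  let t : A → Finset α := fun a => {b ∈ hB.toFinset | (a : α) ≤ b}
  obtain ⟨f, hf, hft⟩ := (Finset.all_card_le_biUnion_card_iff_exists_injective t).1 fun s => by
    have hs : s.biUnion t = {b ∈ hB.toFinset | ∃ a ∈ s.map (Embedding.subtype _), a ≤ b} := by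
      ext b
      simp [t]
      tauto
    simpa [hs] using h (s.map (Embedding.subtype _)) (by simp)
  have hft' : ∀ a, f a ∈ B ∧ (a : α) ≤ f a := fun a => by simpa [t] using hft a
  exact matchesInto_of_injective f hf (fun a => (hft' a).1) fun a => (hft' a).2

end Matching

section Preorder

variable {α : Type*} [Preorder α] {f g : α → α} {A B C : Set α}

theorem isMatching_id (h : A ⊆ B) : IsMatching id A B :=
  ⟨h, injOn_id A, fun _ _ => le_rfl⟩

theorem IsMatching.comp (hg : IsMatching g B C) (hf : IsMatching f A B) :
    IsMatching (g ∘ f) A C :=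
  ⟨hg.1.comp hf.1, hg.2.1.comp hf.2.1 hf.1,
    fun a ha => (hf.2.2 a ha).trans (hg.2.2 _ (hf.1 ha))⟩

theorem MatchesInto.trans (h₁ : MatchesInto A B) (h₂ : MatchesInto B C) : MatchesInto A C :=
  let ⟨f, hf⟩ := h₁; let ⟨g, hg⟩ := h₂; ⟨g ∘ f, hg.comp hf⟩

end Preorder

section Cardinal

open Cardinal

theorem Cardinal.isRegular_of_aleph0_le_of_lt_aleph_omega0 {κ : Cardinal} (h₁ : ℵ₀ ≤ κ)
    (h₂ : κ < ℵ_ Ordinal.omega0) : κ.IsRegular := by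
  obtain ⟨o, rfl⟩ := mem_range_aleph_iff.2 h₁
  obtain ⟨n, rfl⟩ := Ordinal.lt_omega0.1 (aleph_lt_aleph.1 h₂)
  cases n with
  | zero => simpa using isRegular_aleph0
  | succ n =>
    rw [Nat.cast_succ]
    exact isRegular_aleph_add_one _

theorem matchesInto_of_forall_mk_le {α : Type*} [LE α] {A B : Set α}
    (h : ∀ a ∈ A, #A ≤ #{b ∈ B | a ≤ b}) : MatchesInto A B := by
  obtain ⟨e⟩ : Nonempty ((#A).ord.ToType ≃ A) := Cardinal.eq.1 (mk_ord_toType _)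
  -- Going through `A` in order type `#A`, fewer than `#A` targets are used up at each step.
  have hfree : ∀ x (g : Iio x → α), ({b ∈ B | (e x : α) ≤ b} \ range g).Nonempty := by
    intro x g
    refine sdiff_nonempty.2 fun hsub => (h _ (e x).2).not_gt ?_
    calc #{b ∈ B | (e x : α) ≤ b} ≤ #(range g) := mk_le_mk_of_subset hsub
      _ ≤ #(Iio x) := mk_range_le
      _ < #A := by simpa using mk_Iio_lt x
  let g : (#A).ord.ToType → α :=
    wellFounded_lt.fix fun x ih => (hfree x fun y => ih y.1 y.2).some
  have hg : ∀ x, g x ∈ {b ∈ B | (e x : α) ≤ b} \ range fun y : Iio x => g y := fun x => by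
    rw [show g x = _ from wellFounded_lt.fix_eq _ x]
    exact (hfree x _).some_mem
  have hinj : Injective g := by
    intro x y hxy
    by_contra hne
    rcases lt_or_gt_of_ne hne with h | h
    · exact (hg y).2 ⟨⟨x, h⟩, hxy⟩
    · exact (hg x).2 ⟨⟨y, h⟩, hxy.symm⟩
  refine matchesInto_of_injective (g ∘ e.symm) (hinj.comp e.symm.injective)
    (fun a => ((hg _).1).1) fun a => ?_
  simpa using ((hg (e.symm a)).1).2

theorem exists_mapsTo_injOn_of_mk_le {α : Type*} {s t : Set α} (h : #s ≤ #t) :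
    ∃ f : α → α, MapsTo f s t ∧ InjOn f s := by
  classical
  obtain ⟨e⟩ := h
  refine ⟨fun x => if hx : x ∈ s then e ⟨x, hx⟩ else x, fun x hx => by simp [hx],
    fun x hx y hy hxy => ?_⟩
  simp only [hx, hy, dite_true] at hxy
  exact congrArg Subtype.val (e.injective (Subtype.ext hxy))

end Cardinal

section Graded

variable {α : Type*} [PartialOrder α]

def intervalAtoms (u v : α) : Set α :=
  {a | u ⋖ a ∧ a ≤ v}

def intervalCoatoms (u v : α) : Set α :=
  {h | u ≤ h ∧ h ⋖ v}

variable [GradeOrder ℕ α] {u v : α}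

variable (α) in
def IntervalsMatch (m : ℕ) : Prop :=
  ∀ u v : α, u ≤ v → grade ℕ v = grade ℕ u + m →
    MatchesInto (intervalAtoms u v) (intervalCoatoms u v)

theorem intervalAtoms_subset_intervalCoatoms (h : grade ℕ v = grade ℕ u + 2) :
    intervalAtoms u v ⊆ intervalCoatoms u v := fun a ha =>
  ⟨ha.1.le, covBy_of_le_of_grade_eq_add_one ha.2 (by rw [ha.1.grade_eq_add_one]; omega)⟩

theorem intervalsMatch_two : IntervalsMatch α 2 :=
  fun _ _ _ hlen => ⟨id, isMatching_id (intervalAtoms_subset_intervalCoatoms hlen)⟩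

end Graded

section Interval

variable {L : Type*} [Lattice L] {u v ℓ F x y c q : L}

def transversals (u v ℓ q : L) : Set L :=
  {h ∈ intervalCoatoms u v | ℓ ⊓ h = q}

theorem isMatching_of_mem_transversals {A : Set L} {t : L → L}
    (ht : ∀ q ∈ A, t q ∈ transversals u v ℓ q) : IsMatching t A (intervalCoatoms u v) :=
  ⟨fun q hq => (ht q hq).1, fun q hq q' hq' he => by rw [← (ht q hq).2, ← (ht q' hq').2, he],
    fun q hq => (ht q hq).2.ge.trans inf_le_right⟩

theorem not_le_of_inf_eq (hinf : ℓ ⊓ F = u) (hq : q ∈ intervalAtoms u ℓ) : ¬ q ≤ F :=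
  fun h => hq.1.ne' (le_antisymm (hinf ▸ le_inf hq.2 h) hq.1.le)

variable [IsUpperModularLattice L]

theorem CovBy.covBy_sup_of_le_of_not_le (hc : u ⋖ c) (hux : u ≤ x) (hcx : ¬ c ≤ x) :
    x ⋖ x ⊔ c := by
  rw [sup_comm]
  exact covBy_sup_of_inf_covBy_left (hc.inf_eq_of_le_of_not_le hux hcx ▸ hc)

theorem injOn_sup_of_not_le {p h : L} (hp : u ⋖ p) (hph : ¬ p ≤ h) :
    InjOn (· ⊔ p) {q | u ≤ q ∧ q ≤ h} := by
  have key : ∀ q ∈ {q | u ≤ q ∧ q ≤ h}, (q ⊔ p) ⊓ h = q := fun q hq =>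
    (hp.covBy_sup_of_le_of_not_le hq.1 fun hpq => hph (hpq.trans hq.2)).inf_eq_of_le_of_not_le
      hq.2 fun hqp => hph (le_sup_right.trans hqp)
  intro q hq q' hq' he
  rw [← key q hq, ← key q' hq']
  exact congrArg (· ⊓ h) he

variable [OrderBot L] [IsAtomistic L]

theorem exists_covBy_le_not_le (hux : u ≤ x) (huy : u ≤ y) (hxy : ¬ x ≤ y) :
    ∃ c, u ⋖ c ∧ c ≤ x ∧ ¬ c ≤ y := by
  obtain ⟨a, ha, hax, hay⟩ : ∃ a, IsAtom a ∧ a ≤ x ∧ ¬ a ≤ y := by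
    by_contra! H
    exact hxy (le_iff_atom_le_imp.2 H)
  exact ⟨u ⊔ a, ha.bot_covBy.covBy_sup_of_le_of_not_le bot_le fun h => hay (h.trans huy),
    sup_le hux hax, fun h => hay (le_sup_right.trans h)⟩

theorem intervalCoatoms_finite (h : (intervalAtoms u v).Finite) :
    (intervalCoatoms u v).Finite := by
  refine Finite.of_finite_image (f := fun h => {a ∈ intervalAtoms u v | a ≤ h})
    (h.finite_subsets.subset ?_) ?_
  · rintro _ ⟨h, -, rfl⟩ a ha
    exact ha.1
  · have key : ∀ h ∈ intervalCoatoms u v, ∀ h' ∈ intervalCoatoms u v,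
        {a ∈ intervalAtoms u v | a ≤ h} ⊆ {a ∈ intervalAtoms u v | a ≤ h'} → h ≤ h' := by
      intro h hh h' hh' hsub
      by_contra hhh'
      obtain ⟨c, hc, hch, hch'⟩ := exists_covBy_le_not_le hh.1 hh'.1 hhh'
      exact hch' (hsub ⟨⟨hc, hch.trans hh.2.le⟩, hch⟩).2
    intro h hh h' hh' he
    exact le_antisymm (key h hh h' hh' he.le) (key h' hh' h hh he.ge)

variable [WellFoundedGT L]

theorem exists_mem_intervalCoatoms_le_not_le (hux : u ≤ x) (hxv : x ≤ v)
    (hc : c ∈ intervalAtoms u v) (hcx : ¬ c ≤ x) :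
    ∃ h ∈ intervalCoatoms u v, x ≤ h ∧ ¬ c ≤ h := by
  obtain ⟨y, ⟨hxy, hyv, hcy⟩, hmax⟩ :=
    wellFounded_gt.has_min {w | x ≤ w ∧ w ≤ v ∧ ¬ c ≤ w} ⟨x, le_rfl, hxv, hcx⟩
  have hyc : y ⋖ y ⊔ c := hc.1.covBy_sup_of_le_of_not_le (hux.trans hxy) hcy
  -- `y ⊔ c = v`: otherwise an atom of `[y, v]` outside `y ⊔ c` would contradict maximality.
  have hv : y ⊔ c = v := by
    refine le_antisymm (sup_le hyv hc.2) (by_contra fun hvyc => ?_)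
    obtain ⟨e, hye, hev, hec⟩ := exists_covBy_le_not_le hyv le_sup_left hvyc
    have hce : c ≤ e := by
      by_contra hce
      exact hmax e ⟨hxy.trans hye.le, hev, hce⟩ hye.lt
    exact hec (hyc.eq_of_covBy_of_le hye (sup_le hye.le hce)).ge
  exact ⟨y, ⟨hux.trans hxy, hv ▸ hyc⟩, hxy, hcy⟩

theorem exists_mem_intervalCoatoms_inf_eq (hxv : x ≤ v)
    (hy : y ∈ intervalCoatoms u x) : ∃ h ∈ intervalCoatoms u v, y ≤ h ∧ x ⊓ h = y := by
  obtain ⟨c, hc, hcx, hcy⟩ := exists_covBy_le_not_le (hy.1.trans hy.2.le) hy.1 hy.2.lt.not_ge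
  obtain ⟨h, hh, hyh, hch⟩ :=
    exists_mem_intervalCoatoms_le_not_le hy.1 (hy.2.le.trans hxv) ⟨hc, hcx.trans hxv⟩ hcy
  exact ⟨h, hh, hyh, hy.2.inf_eq_of_le_of_not_le hyh fun hxh => hch (hcx.trans hxh)⟩

theorem matchesInto_intervalCoatoms_of_le (hxv : x ≤ v) :
    MatchesInto (intervalCoatoms u x) (intervalCoatoms u v) := by
  choose! f hf hyf hxf using fun y (hy : y ∈ intervalCoatoms u x) =>
    exists_mem_intervalCoatoms_inf_eq hxv hy
  refine ⟨f, hf, fun y hy y' hy' he => ?_, hyf⟩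
  rw [← hxf y hy, ← hxf y' hy', he]

end Interval

section Main

open Cardinal

variable {L : Type*} [Lattice L] [IsUpperModularLattice L] [GradeOrder ℕ L]
  {u v ℓ F q q₁ q₂ : L} {n : ℕ}

theorem sup_eq_of_mem_intervalAtoms (hℓ : grade ℕ ℓ = grade ℕ u + 2)
    (hq₁ : q₁ ∈ intervalAtoms u ℓ) (hq₂ : q₂ ∈ intervalAtoms u ℓ) (hne : q₁ ≠ q₂) :
    q₁ ⊔ q₂ = ℓ :=
  (hq₂.1.covBy_sup_of_le_of_not_le hq₁.1.le fun h => hne (hq₂.1.eq_of_covBy_of_le hq₁.1 h).symm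
    ).eq_of_covBy_of_le (intervalAtoms_subset_intervalCoatoms hℓ hq₁).2 (sup_le hq₁.2 hq₂.2)

theorem sup_mem_transversals (hℓ : grade ℕ ℓ = grade ℕ u + 2) (hinf : ℓ ⊓ F = u)
    (hsup : ℓ ⊔ F = v) (hF : grade ℕ v = grade ℕ F + 2) (hq : q ∈ intervalAtoms u ℓ) :
    F ⊔ q ∈ transversals u v ℓ q := by
  have hFq : F ⋖ F ⊔ q :=
    hq.1.covBy_sup_of_le_of_not_le (hinf ▸ inf_le_right) (not_le_of_inf_eq hinf hq)
  have hFqv : F ⊔ q ⋖ v := covBy_of_le_of_grade_eq_add_one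
    (hsup ▸ sup_le le_sup_right (hq.2.trans le_sup_left)) (by rw [hFq.grade_eq_add_one]; omega)
  refine ⟨⟨(hinf ▸ inf_le_right).trans hFq.le, hFqv⟩,
    (intervalAtoms_subset_intervalCoatoms hℓ hq).2.inf_eq_of_le_of_not_le le_sup_right
      fun hℓFq => hFqv.lt.not_ge ?_⟩
  exact hsup ▸ sup_le hℓFq le_sup_left

theorem sup_mem_intervalCoatoms_of_mem_intervalCoatoms {y : L}
    (hℓ : grade ℕ ℓ = grade ℕ u + 2) (hinf : ℓ ⊓ F = u) (hsup : ℓ ⊔ F = v)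
    (hF : grade ℕ v = grade ℕ F + 2) (hq₁ : q₁ ∈ intervalAtoms u ℓ)
    (hq₂ : q₂ ∈ intervalAtoms u ℓ) (hne : q₁ ≠ q₂) (hy : y ∈ intervalCoatoms u F) :
    ℓ ⊔ y ∈ intervalCoatoms u v ∧ F ⊓ (ℓ ⊔ y) = y := by
  have hyq₁ : y ⋖ y ⊔ q₁ := hq₁.1.covBy_sup_of_le_of_not_le hy.1
    fun h => not_le_of_inf_eq hinf hq₁ (h.trans hy.2.le)
  -- `y ⊔ q₁` lies in the transversal `F ⊔ q₁` at `q₁`, which misses `q₂`.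
  have hq₂y : ¬ q₂ ≤ y ⊔ q₁ := fun h => by
    have hT := (sup_mem_transversals hℓ hinf hsup hF hq₁).2
    exact hne ((hq₂.1.eq_of_covBy_of_le hq₁.1
      (hT ▸ le_inf hq₂.2 (h.trans (sup_le_sup_right hy.2.le _)))).symm)
  have hℓy : y ⊔ q₁ ⋖ ℓ ⊔ y := by
    have : ℓ ⊔ y = y ⊔ q₁ ⊔ q₂ := by
      rw [← sup_eq_of_mem_intervalAtoms hℓ hq₁ hq₂ hne]
      ac_rfl
    rw [this]
    exact hq₂.1.covBy_sup_of_le_of_not_le (hy.1.trans le_sup_left) hq₂y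
  have hℓyv : ℓ ⊔ y ⋖ v := covBy_of_le_of_grade_eq_add_one
    (hsup ▸ sup_le_sup_left hy.2.le _)
    (by rw [hℓy.grade_eq_add_one, hyq₁.grade_eq_add_one, hF, hy.2.grade_eq_add_one])
  refine ⟨⟨hy.1.trans le_sup_right, hℓyv⟩, hy.2.inf_eq_of_le_of_not_le le_sup_right
    fun hFℓy => hℓyv.lt.not_ge ?_⟩
  exact hsup ▸ sup_le le_sup_left hFℓy

theorem matchesInto_of_complement (hℓ : grade ℕ ℓ = grade ℕ u + 2) (hinf : ℓ ⊓ F = u)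
    (hsup : ℓ ⊔ F = v) (hF : grade ℕ v = grade ℕ F + 2) (hq₁ : q₁ ∈ intervalAtoms u ℓ)
    (hq₂ : q₂ ∈ intervalAtoms u ℓ) (hne : q₁ ≠ q₂)
    (hoff : ∀ c ∈ intervalAtoms u v, ¬ c ≤ ℓ → c ≤ F)
    (hmatch : MatchesInto (intervalAtoms u F) (intervalCoatoms u F)) :
    MatchesInto (intervalAtoms u v) (intervalCoatoms u v) := by
  obtain ⟨g, hg⟩ := hmatch
  have hT := fun q hq => sup_mem_transversals (F := F) (q := q) hℓ hinf hsup hF hq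
  have hy := fun y hy =>
    sup_mem_intervalCoatoms_of_mem_intervalCoatoms (y := y) hℓ hinf hsup hF hq₁ hq₂ hne hy
  have hℓ' : IsMatching (ℓ ⊔ ·) (intervalCoatoms u F) (intervalCoatoms u v) :=
    ⟨fun y hy' => (hy y hy').1, fun y hy' y' hy'' he => by
      rw [← (hy y hy').2, ← (hy y' hy'').2]
      exact congrArg (F ⊓ ·) he, fun y _ => le_sup_right⟩
  refine ⟨_, ((isMatching_of_mem_transversals hT).piecewise (hℓ'.comp hg) ?_).mono ?_⟩
  · intro q hq c _ he
    have : ℓ ⊓ (F ⊔ q) = ℓ := (congrArg (ℓ ⊓ ·) he).trans inf_sup_self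
    exact (intervalAtoms_subset_intervalCoatoms hℓ hq).2.ne ((hT q hq).2.symm.trans this)
  · intro a ha
    by_cases haℓ : a ≤ ℓ
    · exact Or.inl ⟨ha.1, haℓ⟩
    · exact Or.inr ⟨ha.1, hoff a ha haℓ⟩

theorem matchesInto_of_complement_of_covBy (hℓ : grade ℕ ℓ = grade ℕ u + 2)
    (hinf : ℓ ⊓ F = u) (hsup : ℓ ⊔ F = v) (hF : grade ℕ v = grade ℕ F + 2)
    (hq₁ : q₁ ∈ intervalAtoms u ℓ) (hoff : ∀ c ∈ intervalAtoms u v, ¬ c ≤ ℓ → c ≤ F)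
    (huF : u ⋖ F) : MatchesInto (intervalAtoms u v) (intervalCoatoms u v) := by
  classical
  have hT := fun q hq => sup_mem_transversals (F := F) (q := q) hℓ hinf hsup hF hq
  have hℓv : ℓ ∈ intervalCoatoms u v := ⟨hinf ▸ inf_le_left, covBy_of_le_of_grade_eq_add_one
    (hsup ▸ le_sup_left) (by rw [hF, huF.grade_eq_add_one, hℓ])⟩
  have hFℓ : ¬ F ≤ ℓ := fun h => huF.ne (hinf ▸ inf_eq_right.2 h)
  let π : L → L := fun a => if a ≤ ℓ then a else q₁
  have hπ : ∀ a ∈ intervalAtoms u v, π a ∈ intervalAtoms u ℓ := fun a ha => by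
    by_cases haℓ : a ≤ ℓ
    · simpa [π, haℓ] using ⟨ha.1, haℓ⟩
    · simpa [π, haℓ] using hq₁
  -- `q₁ ↦ ℓ`, the only atom `F` off `ℓ` goes to `F ⊔ q₁`, and the other points `q` to `F ⊔ q`.
  refine ⟨fun a => if a = q₁ then ℓ else F ⊔ π a, fun a ha => ?_, fun a ha b hb he => ?_,
    fun a ha => ?_⟩
  · dsimp only
    split_ifs
    · exact hℓv
    · exact (hT _ (hπ a ha)).1
  · dsimp only at he
    split_ifs at he with ha₁ hb₁ hb₁
    · rw [ha₁, hb₁]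
    · exact absurd (he ▸ le_sup_left) hFℓ
    · exact absurd (he ▸ le_sup_left) hFℓ
    · have hπab : π a = π b := by rw [← (hT _ (hπ a ha)).2, ← (hT _ (hπ b hb)).2, he]
      simp only [π] at hπab
      split_ifs at hπab with haℓ hbℓ hbℓ
      · exact hπab
      · exact absurd hπab ha₁
      · exact absurd hπab.symm hb₁
      · rw [ha.1.eq_of_covBy_of_le huF (hoff a ha haℓ), hb.1.eq_of_covBy_of_le huF (hoff b hb hbℓ)]
  · dsimp only
    split_ifs with ha₁
    · exact ha₁ ▸ hq₁.2
    · by_cases haℓ : a ≤ ℓ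
      · simp [π, haℓ]
      · exact (ha.1.eq_of_covBy_of_le huF (hoff a ha haℓ)).le.trans le_sup_left

theorem exists_mk_le_mk_intervalAtoms_of_mk_lt {a : L} (IH : IntervalsMatch L (n - 1))
    (hlen : grade ℕ v = grade ℕ u + n) (hreg : (#(intervalAtoms u v)).IsRegular)
    (ha : a ∈ intervalAtoms u v) (hlt : #(intervalCoatoms a v) < #(intervalAtoms u v)) :
    ∃ ℓ ∈ intervalAtoms a v, #(intervalAtoms u v) ≤ #(intervalAtoms u ℓ) := by
  by_contra! H
  have hav : #(intervalAtoms a v) < #(intervalAtoms u v) := by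
    have hgr := grade_mono (𝕆 := ℕ) ha.2
    rw [ha.1.grade_eq_add_one] at hgr
    obtain ⟨f, hf, -⟩ := (IH a v ha.2 (by rw [ha.1.grade_eq_add_one]; omega)).exists_injective
    exact (mk_le_of_injective hf).trans_lt hlt
  -- Every atom `b ≠ a` lies on the line `a ⊔ b`, and there are few lines through `a`.
  have hcover : intervalAtoms u v ⊆ insert a (⋃ ℓ ∈ intervalAtoms a v, intervalAtoms u ℓ) := by
    intro b hb
    by_cases hba : b = a
    · exact hba ▸ mem_insert _ _
    · exact mem_insert_of_mem _ (mem_biUnion (x := a ⊔ b)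
        ⟨hb.1.covBy_sup_of_le_of_not_le ha.1.le fun h => hba (hb.1.eq_of_covBy_of_le ha.1 h),
          sup_le ha.2 hb.2⟩ ⟨hb.1, le_sup_right⟩)
  have hU : #(⋃ ℓ ∈ intervalAtoms a v, intervalAtoms u ℓ) < #(intervalAtoms u v) :=
    (card_biUnion_lt_iff_forall_of_isRegular hreg hav).2 fun ℓ hℓ => H ℓ hℓ
  exact ((mk_le_mk_of_subset hcover).trans mk_insert_le).not_gt
    (add_lt_of_lt hreg.aleph0_le hU (one_lt_aleph0.trans_le hreg.aleph0_le))

variable [OrderBot L] [IsAtomistic L] [WellFoundedGT L]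

open scoped Classical in
/-- The Hall condition for a set of atoms spanning `[u, v]`, by double counting. -/
theorem card_le_card_of_sup_eq (hn : 2 ≤ n) (IH : IntervalsMatch L (n - 1))
    (hlen : grade ℕ v = grade ℕ u + n) (hH : (intervalCoatoms u v).Finite) {S : Finset L}
    (hS : ↑S ⊆ intervalAtoms u v) (hspan : u ⊔ S.sup id = v) :
    S.card ≤ {h ∈ hH.toFinset | ∃ p ∈ S, p ≤ h}.card := by
  set N := {h ∈ hH.toFinset | ∃ p ∈ S, p ≤ h}
  have hN : ∀ h, h ∈ N ↔ h ∈ intervalCoatoms u v ∧ ∃ p ∈ S, p ≤ h := by simp [N]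
  have hle_of_forall : ∀ y, u ≤ y → (∀ p ∈ S, p ≤ y) → v ≤ y := fun y huy hy =>
    hspan ▸ sup_le huy (Finset.sup_le hy)
  refine Finset.card_le_card_of_degree_le_of_not_rel (· ≤ ·) S N (fun p hp => ?_)
    (fun h hh => ⟨((hN h).1 hh).2, ?_⟩) (fun p hp h hh hph => ?_)
  · have hpv : ¬ v ≤ p := fun hvp => by
      have : grade ℕ v ≤ grade ℕ p := grade_mono hvp
      rw [(hS hp).1.grade_eq_add_one] at this
      omega
    obtain ⟨q, hq, hqp⟩ : ∃ q ∈ S, ¬ q ≤ p := by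
      by_contra! H
      exact hpv (hle_of_forall p (hS hp).1.le H)
    have hpq : ¬ p ≤ q := fun hpq => hqp ((hS hp).1.eq_of_covBy_of_le (hS hq).1 hpq).ge
    obtain ⟨h, hh, hqh, hph⟩ :=
      exists_mem_intervalCoatoms_le_not_le (hS hq).1.le (hS hq).2 (hS hp) hpq
    exact ⟨h, (hN h).2 ⟨hh, q, hq, hqh⟩, hph⟩
  · by_contra! H
    have hh := ((hN h).1 hh).1
    exact hh.2.lt.not_ge (hle_of_forall h hh.1 H)
  · have hp' := hS hp
    obtain ⟨g, hg⟩ := IH p v hp'.2 (by rw [hp'.1.grade_eq_add_one]; omega)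
    have hsup : ∀ q ∈ {q ∈ S | q ≤ h}, q ⊔ p ∈ intervalAtoms p v := fun q hq => by
      obtain ⟨hqS, hqh⟩ := Finset.mem_filter.1 hq
      rw [sup_comm]
      exact ⟨(hS hqS).1.covBy_sup_of_le_of_not_le hp'.1.le
        fun hqp => hph (((hS hqS).1.eq_of_covBy_of_le hp'.1 hqp) ▸ hqh),
        sup_le hp'.2 (hS hqS).2⟩
    refine Finset.card_le_card_of_injOn (g ∘ (· ⊔ p)) (fun q hq => ?_) ?_
    · have hgq := hg.1 (hsup q hq)
      have hpg : p ≤ g (q ⊔ p) := (hsup q hq).1.le.trans (hg.2.2 _ (hsup q hq))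
      exact Finset.mem_filter.2 ⟨(hN _).2 ⟨⟨hp'.1.le.trans hgq.1, hgq.2⟩, p, hp, hpg⟩, hpg⟩
    · refine hg.2.1.comp ((injOn_sup_of_not_le hp'.1 hph).mono fun q hq => ?_) hsup
      obtain ⟨hqS, hqh⟩ := Finset.mem_filter.1 hq
      exact ⟨(hS hqS).1.le, hqh⟩

theorem matchesInto_of_intervalAtoms_finite (hn : 2 ≤ n) (IH : IntervalsMatch L (n - 1))
    (huv : u ≤ v) (hlen : grade ℕ v = grade ℕ u + n) (hA : (intervalAtoms u v).Finite) :
    MatchesInto (intervalAtoms u v) (intervalCoatoms u v) := by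
  have hH := intervalCoatoms_finite hA
  refine matchesInto_of_forall_card_le hH fun S hS => ?_
  have hSx : ∀ p ∈ S, p ≤ u ⊔ S.sup id :=
    fun p hp => le_sup_of_le_right (Finset.le_sup (f := id) hp)
  rcases (sup_le huv (Finset.sup_le fun p hp => (hS hp).2)).eq_or_lt with hx | hx
  · exact card_le_card_of_sup_eq hn IH hlen hH hS hx
  · -- `S` lies in `[u, h]` for a coatom `h`, whose matching extends to `[u, v]`.
    obtain ⟨h, hxh, hhv⟩ := exists_le_covBy_of_lt hx
    have huh : u ≤ h := le_sup_left.trans hxh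
    have hm : MatchesInto (intervalAtoms u h) (intervalCoatoms u v) :=
      (IH u h huh (by rw [hhv.grade_eq_add_one] at hlen; omega)).trans
        (matchesInto_intervalCoatoms_of_le hhv.le)
    exact hm.card_le hH fun p hp => ⟨(hS hp).1, (hSx p hp).trans hxh⟩

theorem exists_mem_transversals_of_le {x q' : L} (hℓ : grade ℕ ℓ = grade ℕ u + 2) (hℓv : ℓ ≤ v)
    (hq : q ∈ intervalAtoms u ℓ) (hq' : q' ∈ intervalAtoms u ℓ) (hqx : q ≤ x) (hxv : x ≤ v)
    (hq'x : ¬ q' ≤ x) : ∃ h ∈ transversals u v ℓ q, x ≤ h := by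
  obtain ⟨h, hh, hxh, hq'h⟩ :=
    exists_mem_intervalCoatoms_le_not_le (hq.1.le.trans hqx) hxv ⟨hq'.1, hq'.2.trans hℓv⟩ hq'x
  exact ⟨h, ⟨hh, (intervalAtoms_subset_intervalCoatoms hℓ hq).2.inf_eq_of_le_of_not_le
    (hqx.trans hxh) fun hℓh => hq'h (hq'.2.trans hℓh)⟩, hxh⟩

theorem exists_mem_transversals_ge {b q' : L} (hℓ : grade ℕ ℓ = grade ℕ u + 2) (hℓv : ℓ ≤ v)
    (hq : q ∈ intervalAtoms u ℓ) (hq' : q' ∈ intervalAtoms u ℓ) (hne : q ≠ q')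
    (hb : b ∈ intervalAtoms u v) (hbℓ : ¬ b ≤ ℓ) : ∃ h ∈ transversals u v ℓ q, b ≤ h := by
  have hqb : q ⋖ q ⊔ b :=
    hb.1.covBy_sup_of_le_of_not_le hq.1.le fun hbq => hbℓ (hbq.trans hq.2)
  -- The line `q ⊔ b` is not `ℓ = q ⊔ q'`, so it misses `q'`.
  have hq'b : ¬ q' ≤ q ⊔ b := fun hq'b => by
    have hℓ' : ℓ ≤ q ⊔ b := sup_eq_of_mem_intervalAtoms hℓ hq hq' hne ▸ sup_le le_sup_left hq'b
    exact hbℓ (((intervalAtoms_subset_intervalCoatoms hℓ hq).2.eq_of_covBy_of_le hqb hℓ').ge.trans'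
      le_sup_right)
  obtain ⟨h, hh, hqbh⟩ := exists_mem_transversals_of_le hℓ hℓv hq hq' le_sup_left
    (sup_le (hq.2.trans hℓv) hb.2) hq'b
  exact ⟨h, hh, le_sup_right.trans hqbh⟩

theorem exists_complement_of_subsingleton_transversals (hℓ : grade ℕ ℓ = grade ℕ u + 2)
    (hℓv : ℓ ≤ v) (hq₁ : q₁ ∈ intervalAtoms u ℓ) (hq₂ : q₂ ∈ intervalAtoms u ℓ) (hne : q₁ ≠ q₂)
    (hs₁ : (transversals u v ℓ q₁).Subsingleton) (hs₂ : (transversals u v ℓ q₂).Subsingleton) :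
    ∃ F, ℓ ⊓ F = u ∧ ℓ ⊔ F = v ∧ grade ℕ v = grade ℕ F + 2 ∧
      ∀ c ∈ intervalAtoms u v, ¬ c ≤ ℓ → c ≤ F := by
  have hq₁₂ : ¬ q₁ ≤ q₂ := fun h => hne (hq₁.1.eq_of_covBy_of_le hq₂.1 h)
  have hq₂₁ : ¬ q₂ ≤ q₁ := fun h => hne (hq₂.1.eq_of_covBy_of_le hq₁.1 h).symm
  obtain ⟨h₁, hh₁, -⟩ :=
    exists_mem_transversals_of_le hℓ hℓv hq₁ hq₂ le_rfl (hq₁.2.trans hℓv) hq₂₁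
  obtain ⟨h₂, hh₂, -⟩ :=
    exists_mem_transversals_of_le hℓ hℓv hq₂ hq₁ le_rfl (hq₂.2.trans hℓv) hq₁₂
  -- The transversals through `c` at `q₁` and `q₂` can only be `h₁` and `h₂`.
  have hoff : ∀ c ∈ intervalAtoms u v, ¬ c ≤ ℓ → c ≤ h₁ ⊓ h₂ := fun c hc hcℓ => by
    obtain ⟨g₁, hg₁, hcg₁⟩ := exists_mem_transversals_ge hℓ hℓv hq₁ hq₂ hne hc hcℓ
    obtain ⟨g₂, hg₂, hcg₂⟩ := exists_mem_transversals_ge hℓ hℓv hq₂ hq₁ hne.symm hc hcℓ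
    exact le_inf (hs₁ hg₁ hh₁ ▸ hcg₁) (hs₂ hg₂ hh₂ ▸ hcg₂)
  have huℓ : u ≤ ℓ := hq₁.1.le.trans hq₁.2
  have hinf : ℓ ⊓ (h₁ ⊓ h₂) = u := by
    refine le_antisymm ?_ (le_inf huℓ (le_inf hh₁.1.1 hh₂.1.1))
    calc ℓ ⊓ (h₁ ⊓ h₂) ≤ q₁ ⊓ q₂ :=
          le_inf (hh₁.2 ▸ inf_le_inf_left ℓ inf_le_left) (hh₂.2 ▸ inf_le_inf_left ℓ inf_le_right)
      _ = u := hq₁.1.inf_eq_of_le_of_not_le hq₂.1.le hq₁₂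
  have hsup : ℓ ⊔ (h₁ ⊓ h₂) = v := by
    refine le_antisymm (sup_le hℓv (inf_le_left.trans hh₁.1.2.le)) (by_contra fun hv => ?_)
    obtain ⟨c, hc, hcv, hcℓF⟩ :=
      exists_covBy_le_not_le (huℓ.trans hℓv) (huℓ.trans le_sup_left) hv
    by_cases hcℓ : c ≤ ℓ
    · exact hcℓF (le_sup_of_le_left hcℓ)
    · exact hcℓF (le_sup_of_le_right (hoff c ⟨hc, hcv⟩ hcℓ))
  refine ⟨h₁ ⊓ h₂, hinf, hsup, ?_, hoff⟩
  have hF₁ : h₁ ⊓ h₂ ⋖ h₁ ⊓ h₂ ⊔ q₁ :=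
    hq₁.1.covBy_sup_of_le_of_not_le (hinf ▸ inf_le_right) (not_le_of_inf_eq hinf hq₁)
  have hq₂F : ¬ q₂ ≤ h₁ ⊓ h₂ ⊔ q₁ := fun h => hq₂₁ (hh₁.2 ▸ le_inf hq₂.2
    (h.trans (sup_le inf_le_left (hh₁.2.ge.trans inf_le_right))))
  have hFv : h₁ ⊓ h₂ ⊔ q₁ ⋖ v := by
    have : v = h₁ ⊓ h₂ ⊔ q₁ ⊔ q₂ := by
      rw [← hsup, ← sup_eq_of_mem_intervalAtoms hℓ hq₁ hq₂ hne]
      ac_rfl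
    exact this ▸ hq₂.1.covBy_sup_of_le_of_not_le ((hinf ▸ inf_le_right).trans hF₁.le) hq₂F
  rw [hFv.grade_eq_add_one, hF₁.grade_eq_add_one]

theorem matchesInto_of_mk_off_line_le (hℓ : grade ℕ ℓ = grade ℕ u + 2) (hℓv : ℓ ≤ v)
    (hP : (intervalAtoms u ℓ).Nontrivial)
    (hO : #{b ∈ intervalAtoms u v | ¬ b ≤ ℓ} ≤
      #{q ∈ intervalAtoms u ℓ | ¬ (transversals u v ℓ q).Subsingleton}) :
    MatchesInto (intervalAtoms u v) (intervalCoatoms u v) := by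
  classical
  obtain ⟨σ, hσ, hσinj⟩ := exists_mapsTo_injOn_of_mk_le hO
  have hother : ∀ q, ∃ q' ∈ intervalAtoms u ℓ, q ≠ q' := fun q =>
    let ⟨q', hq', hne⟩ := hP.exists_ne q; ⟨q', hq', hne.symm⟩
  choose! t₂ ht₂ hbt₂ using fun b (hb : b ∈ {b ∈ intervalAtoms u v | ¬ b ≤ ℓ}) =>
    let ⟨_, hq', hne⟩ := hother (σ b)
    exists_mem_transversals_ge hℓ hℓv (hσ hb).1 hq' hne hb.1 hb.2
  -- A point `q = σ b` has a second transversal besides `t₂ b`; other points need just one.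
  have ht₁ : ∀ q ∈ intervalAtoms u ℓ, ∃ h ∈ transversals u v ℓ q,
      ∀ b ∈ {b ∈ intervalAtoms u v | ¬ b ≤ ℓ}, σ b = q → h ≠ t₂ b := by
    intro q hq
    by_cases hqσ : ∃ b ∈ {b ∈ intervalAtoms u v | ¬ b ≤ ℓ}, σ b = q
    · obtain ⟨b, hb, rfl⟩ := hqσ
      obtain ⟨h, hh, h', hh', hhh'⟩ := not_subsingleton_iff.1 (hσ hb).2
      have huniq := fun b' hb' (he : σ b' = σ b) => hσinj hb' hb he
      by_cases hb' : h = t₂ b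
      · exact ⟨h', hh', fun b' hb'' he => huniq b' hb'' he ▸ hb' ▸ hhh'.symm⟩
      · exact ⟨h, hh, fun b' hb'' he => huniq b' hb'' he ▸ hb'⟩
    · obtain ⟨q', hq', hne⟩ := hother q
      obtain ⟨h, hh, -⟩ := exists_mem_transversals_of_le hℓ hℓv hq hq' le_rfl (hq.2.trans hℓv)
        fun h => hne (hq'.1.eq_of_covBy_of_le hq.1 h).symm
      exact ⟨h, hh, fun b hb hbq => absurd ⟨b, hb, hbq⟩ hqσ⟩
  choose! t₁ ht₁ ht₁₂ using ht₁
  have hm₂ : IsMatching t₂ {b ∈ intervalAtoms u v | ¬ b ≤ ℓ} (intervalCoatoms u v) :=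
    ⟨fun b hb => (ht₂ b hb).1,
      fun b hb b' hb' he => hσinj hb hb' ((ht₂ b hb).2.symm.trans (he ▸ (ht₂ b' hb').2)),
      hbt₂⟩
  refine ⟨_, ((isMatching_of_mem_transversals ht₁).piecewise hm₂
    fun q hq b hb he => ht₁₂ q hq b hb ?_ he).mono fun a ha => ?_⟩
  · rw [← (ht₂ b hb).2, ← he, (ht₁ q hq).2]
  · by_cases haℓ : a ≤ ℓ
    · exact Or.inl ⟨ha.1, haℓ⟩
    · exact Or.inr ⟨ha, haℓ⟩

theorem matchesInto_of_mk_le_mk_line (hn : 3 ≤ n)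
    (IH : ∀ m, 2 ≤ m → m < n → IntervalsMatch L m) (hlen : grade ℕ v = grade ℕ u + n)
    (hℓ : grade ℕ ℓ = grade ℕ u + 2) (hℓv : ℓ ≤ v) (hA : ℵ₀ ≤ #(intervalAtoms u v))
    (hbig : #(intervalAtoms u v) ≤ #(intervalAtoms u ℓ)) :
    MatchesInto (intervalAtoms u v) (intervalCoatoms u v) := by
  have hinf : (intervalAtoms u ℓ).Infinite :=
    infinite_coe_iff.1 (Cardinal.infinite_iff.2 (hA.trans hbig))
  set S := {q ∈ intervalAtoms u ℓ | (transversals u v ℓ q).Subsingleton}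
  by_cases hS : S.Subsingleton
  · refine matchesInto_of_mk_off_line_le hℓ hℓv hinf.nontrivial ?_
    have hdiff : {q ∈ intervalAtoms u ℓ | ¬ (transversals u v ℓ q).Subsingleton} =
        intervalAtoms u ℓ \ S := by
      ext q
      simp only [S, mem_sep_iff, mem_sdiff]
      tauto
    rw [hdiff]
    refine (mk_le_mk_of_subset fun b hb => hb.1).trans (le_of_not_gt fun hlt => ?_)
    have := (le_mk_sdiff_add_mk (intervalAtoms u ℓ) S).trans
      (add_le_add le_rfl (mk_le_one_iff_set_subsingleton.2 hS))
    exact (hbig.trans this).not_gt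
      (add_lt_of_lt hA hlt (one_lt_aleph0.trans_le hA))
  · obtain ⟨q₁, hq₁, q₂, hq₂, hne⟩ := not_subsingleton_iff.1 hS
    obtain ⟨F, hinf, hsup, hF, hoff⟩ := exists_complement_of_subsingleton_transversals
      hℓ hℓv hq₁.1 hq₂.1 hne hq₁.2 hq₂.2
    have huF : u ≤ F := hinf ▸ inf_le_right
    rcases (show n = 3 ∨ 4 ≤ n by omega) with rfl | hn
    · exact matchesInto_of_complement_of_covBy hℓ hinf hsup hF hq₁.1 hoff
        (covBy_of_le_of_grade_eq_add_one huF (by omega))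
    · exact matchesInto_of_complement hℓ hinf hsup hF hq₁.1 hq₂.1 hne hoff
        (IH (n - 2) (by omega) (by omega) u F huF (by omega))

theorem matchesInto_of_isRegular (hn : 3 ≤ n) (IH : ∀ m, 2 ≤ m → m < n → IntervalsMatch L m)
    (hlen : grade ℕ v = grade ℕ u + n) (hreg : (#(intervalAtoms u v)).IsRegular) :
    MatchesInto (intervalAtoms u v) (intervalCoatoms u v) := by
  by_cases hbig : ∃ a ∈ intervalAtoms u v, ∃ ℓ ∈ intervalAtoms a v,
      #(intervalAtoms u v) ≤ #(intervalAtoms u ℓ)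
  · obtain ⟨a, ha, ℓ, hℓ, hbig⟩ := hbig
    exact matchesInto_of_mk_le_mk_line hn IH hlen
      (by rw [hℓ.1.grade_eq_add_one, ha.1.grade_eq_add_one]) hℓ.2 hreg.aleph0_le hbig
  · push Not at hbig
    -- Otherwise every atom lies on at least `#(intervalAtoms u v)` coatoms.
    refine matchesInto_of_forall_mk_le fun a ha => le_of_not_gt fun hlt => ?_
    have hsub : intervalCoatoms a v ⊆ {b ∈ intervalCoatoms u v | a ≤ b} :=
      fun b hb => ⟨⟨ha.1.le.trans hb.1, hb.2⟩, hb.1⟩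
    obtain ⟨ℓ, hℓ, hℓbig⟩ := exists_mk_le_mk_intervalAtoms_of_mk_lt
      (IH (n - 1) (by omega) (by omega)) hlen hreg ha ((mk_le_mk_of_subset hsub).trans_lt hlt)
    exact (hbig a ha ℓ hℓ).not_ge hℓbig

theorem intervalsMatch_of_mk_lt_aleph_omega0
    (hL : Cardinal.mk L < Cardinal.aleph Ordinal.omega0) {n : ℕ} (hn : 2 ≤ n) :
    IntervalsMatch L n := by
  induction n using Nat.strong_induction_on with
  | _ n IH =>
  rcases hn.eq_or_lt with rfl | hn
  · exact intervalsMatch_two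
  intro u v huv hlen
  have IH' : ∀ m, 2 ≤ m → m < n → IntervalsMatch L m := fun m hm hmn => IH m hmn hm
  by_cases hA : (intervalAtoms u v).Finite
  · exact matchesInto_of_intervalAtoms_finite hn.le (IH' _ (by omega) (by omega)) huv hlen hA
  · refine matchesInto_of_isRegular hn IH' hlen
      (Cardinal.isRegular_of_aleph0_le_of_lt_aleph_omega0 ?_ ((Cardinal.mk_set_le _).trans_lt hL))
    exact Cardinal.infinite_iff.1 (infinite_coe_iff.2 hA)

end Main

theorem IsAtomP.isAtom {P : Type*} [PartialOrder P] [OrderBot P] {a : P} (h : IsAtomP a) :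
    IsAtom a := by
  obtain ⟨z, hz, hza⟩ := h
  rwa [le_antisymm (hz ⊥) bot_le, bot_covBy_iff] at hza

/-- Every geometric lattice of finite rank at least 2 whose cardinality is less than
`ℵ_ω` has a matching. -/
theorem small_cardinality_geometric_lattice_matching (L : Type u) [CompleteLattice L]
    (hL : IsGeomLatFH L) (r : L → ℕ) (hr : IsRankFn r) (hrank : 2 ≤ r ⊤)
    (hcard : Cardinal.mk L < Cardinal.aleph Ordinal.omega0) :
    HasMatching L := by
  obtain ⟨-, -, hch, hsm, hat⟩ := hL
  have := wellFoundedLT_of_forall_isChain_finite hch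
  have := wellFoundedGT_of_forall_isChain_finite hch
  have : IsAtomistic L := ⟨fun x =>
    let ⟨S, hS, hSx⟩ := hat x; ⟨S, hSx, fun a ha => (hS a ha).isAtom⟩⟩
  have := isUpperModularLattice_of_semimodular hsm
  let _ : GradeOrder ℕ L := ⟨r, strictMono_of_covBy_imp_eq_add_one hr.2,
    fun _ _ h => Order.covBy_iff_add_one_eq.2 (hr.2 _ _ h).symm⟩
  obtain ⟨f, hmaps, hinj, hle⟩ := intervalsMatch_of_mk_lt_aleph_omega0 hcard hrank ⊥ ⊤ bot_le
    (by change r ⊤ = r ⊥ + r ⊤; rw [hr.1, zero_add])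
  have hA : ∀ a : {a : L // IsAtom a}, (a : L) ∈ intervalAtoms ⊥ ⊤ :=
    fun a => ⟨bot_covBy_iff.2 a.2, le_top⟩
  exact ⟨fun a => ⟨f a, covBy_top_iff.1 (hmaps (hA a)).2⟩,
    fun a b hab => Subtype.ext (hinj (hA a) (hA b) (congrArg Subtype.val hab)),
    fun a => hle a (hA a)⟩
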